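/- Define constants c^{(N)}_{p,q} for N ∈ ℕ, 0 ≤ p, q with p + q ≤ 2N, by the recursion c^{(1)} given by 2(1 + x² - d²/dx²) and c^{(N+1)}_{p,q} = 2(c^{(N)}_{p,q} + c^{(N)}_{p-2,q} - c^{(N)}_{p,q-2} - (p+2)(p+1)c^{(N)}_{p+2,q} - 2(p+1)c^{(N)}_{p+1,q-1}), with c^{(N)}_{k,l} = 0 whenever k + l > 2N or k < 0 or l < 0. Then for all N and all p, q with p + q ≤ 2N, |c^{(N)}_{p,q}| ≤ 26^N · (2N - q)^{N - (p+q)/2}. -/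

import Mathlib

/-- The integer coefficients `c^{(N)}_{p,q}` of the expansion of
`2^N (1 + x² - d²/dx²)^N` as `Σ c^{(N)}_{p,q} x^p (d/dx)^q`, defined by the
recursion of the paper (with value `0` for negative indices; the base case
`N = 1` gives `c^{(1)}_{0,0} = 2`, `c^{(1)}_{2,0} = 2`, `c^{(1)}_{0,2} = -2`). -/
def hermCoeff : ℕ → ℤ → ℤ → ℤ
  | 0, p, q => if p = 0 ∧ q = 0 then 1 else 0
  | N + 1, p, q =>
    if p < 0 ∨ q < 0 then 0
    else 2 * (hermCoeff N p q + hermCoeff N (p - 2) q - hermCoeff N p (q - 2)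
      - (p + 2) * (p + 1) * hermCoeff N (p + 2) q
      - 2 * (p + 1) * hermCoeff N (p + 1) (q - 1))

/-!
Bound `c^{(N)}_{p,q}` by `12^N w_N(p,q)`, where `w_N(p,q) = (2N - q)^{N - (p+q)/2}` on the
triangle `p, q ≥ 0, p + q ≤ 2N` and `0` off it, so that the induction also shows that `c^{(N)}`
vanishes off the triangle. In the recursion for `c^{(N+1)}_{p,q}` the weights at level `N` of
the indices `(p + 2, q)` and `(p + 1, q - 1)` have exponents `2` and `1` below that of
`w_{N+1}(p,q)`; these surplus powers of the base pay for the factors `(p+2)(p+1) ≤ (2N - q)²`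
and `p + 1 ≤ 2N + 1 - q`. So each of the five terms is at most `12^N w_{N+1}(p,q)` (twice that
for the last one), and the constant grows by at most `2 · 6 = 12 ≤ 26` per step.
-/

namespace hermCoeff

lemma succ_of_nonneg (N : ℕ) {p q : ℤ} (hp : 0 ≤ p) (hq : 0 ≤ q) :
    hermCoeff (N + 1) p q = 2 * (hermCoeff N p q + hermCoeff N (p - 2) q
      - hermCoeff N p (q - 2) - (p + 2) * (p + 1) * hermCoeff N (p + 2) q
      - 2 * (p + 1) * hermCoeff N (p + 1) (q - 1)) := by
  rw [hermCoeff, if_neg (by omega)]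

lemma succ_of_neg (N : ℕ) {p q : ℤ} (h : p < 0 ∨ q < 0) : hermCoeff (N + 1) p q = 0 := by
  rw [hermCoeff, if_pos h]

end hermCoeff

lemma Int.cast_rpow_div_two_le {b b' k k' : ℤ} (hb : 0 ≤ b) (hbb' : b ≤ b')
    (hb' : 1 ≤ b') (hk : 0 ≤ k) (hkk' : k ≤ k') :
    (b : ℝ) ^ ((k : ℝ) / 2) ≤ (b' : ℝ) ^ ((k' : ℝ) / 2) :=
  (Real.rpow_le_rpow (by exact_mod_cast hb) (by exact_mod_cast hbb') (by positivity)).trans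
    (Real.rpow_le_rpow_of_exponent_le (by exact_mod_cast hb') (by gcongr))

lemma Real.mul_rpow_le_rpow_add_natCast {a x r : ℝ} {m : ℕ} (hx : 0 < x) (ha : a ≤ x ^ m) :
    a * x ^ r ≤ x ^ (r + m) := by
  rw [Real.rpow_add_natCast hx.ne', mul_comm]
  gcongr

noncomputable def hermWeight (N : ℕ) (p q : ℤ) : ℝ :=
  if 0 ≤ p ∧ 0 ≤ q ∧ p + q ≤ 2 * N then
    ((2 * N - q : ℤ) : ℝ) ^ (((2 * N - p - q : ℤ) : ℝ) / 2)
  else 0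

namespace hermWeight

variable {N : ℕ} {p q : ℤ}

lemma eq_rpow (h : 0 ≤ p ∧ 0 ≤ q ∧ p + q ≤ 2 * N) :
    hermWeight N p q = ((2 * N - q : ℤ) : ℝ) ^ (((2 * N - p - q : ℤ) : ℝ) / 2) := if_pos h

lemma eq_zero (h : ¬ (0 ≤ p ∧ 0 ≤ q ∧ p + q ≤ 2 * N)) : hermWeight N p q = 0 := if_neg h

lemma nonneg (N : ℕ) (p q : ℤ) : 0 ≤ hermWeight N p q := by
  unfold hermWeight
  split_ifs with h
  · exact Real.rpow_nonneg (by exact_mod_cast (by omega)) _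
  · rfl

lemma le_succ : hermWeight N p q ≤ hermWeight (N + 1) p q := by
  by_cases h : 0 ≤ p ∧ 0 ≤ q ∧ p + q ≤ 2 * N
  · rw [eq_rpow h, eq_rpow (by push_cast; omega)]
    exact Int.cast_rpow_div_two_le (by omega) (by omega) (by omega) (by omega) (by omega)
  · rw [eq_zero h]
    exact nonneg _ _ _

lemma sub_two_left_le_succ : hermWeight N (p - 2) q ≤ hermWeight (N + 1) p q := by
  by_cases h : 0 ≤ p - 2 ∧ 0 ≤ q ∧ p - 2 + q ≤ 2 * N
  · rw [eq_rpow h, eq_rpow (by push_cast; omega)]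
    exact Int.cast_rpow_div_two_le (by omega) (by omega) (by omega) (by omega) (by omega)
  · rw [eq_zero h]
    exact nonneg _ _ _

lemma sub_two_right_le_succ : hermWeight N p (q - 2) ≤ hermWeight (N + 1) p q := by
  by_cases h : 0 ≤ p ∧ 0 ≤ q - 2 ∧ p + (q - 2) ≤ 2 * N
  · rw [eq_rpow h, eq_rpow (by push_cast; omega)]
    apply le_of_eq
    congr 1 <;> push_cast <;> ring
  · rw [eq_zero h]
    exact nonneg _ _ _

lemma mul_add_two_left_le_succ (hp : 0 ≤ p) :
    ((p : ℝ) + 2) * ((p : ℝ) + 1) * hermWeight N (p + 2) q ≤ hermWeight (N + 1) p q := by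
  by_cases h : 0 ≤ p + 2 ∧ 0 ≤ q ∧ p + 2 + q ≤ 2 * N
  · rw [eq_rpow h, eq_rpow (by push_cast; omega)]
    have hbase : (0 : ℝ) < ((2 * N - q : ℤ) : ℝ) := by exact_mod_cast (by omega)
    have hfactor : ((p : ℝ) + 2) * ((p : ℝ) + 1) ≤ ((2 * N - q : ℤ) : ℝ) ^ 2 := by
      exact_mod_cast (by nlinarith : (p + 2) * (p + 1) ≤ (2 * N - q) ^ 2)
    calc _ ≤ _ := Real.mul_rpow_le_rpow_add_natCast hbase hfactor
      _ = ((2 * N - q : ℤ) : ℝ) ^ (((2 * N + 2 - p - q : ℤ) : ℝ) / 2) := by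
          congr 1; push_cast; ring
      _ ≤ _ := Int.cast_rpow_div_two_le (by omega) (by omega) (by omega) (by omega) (by omega)
  · rw [eq_zero h, mul_zero]
    exact nonneg _ _ _

lemma mul_add_one_sub_one_le_succ (hp : 0 ≤ p) :
    ((p : ℝ) + 1) * hermWeight N (p + 1) (q - 1) ≤ hermWeight (N + 1) p q := by
  by_cases h : 0 ≤ p + 1 ∧ 0 ≤ q - 1 ∧ p + 1 + (q - 1) ≤ 2 * N
  · rw [eq_rpow h, eq_rpow (by push_cast; omega)]
    have hbase : (0 : ℝ) < ((2 * N - (q - 1) : ℤ) : ℝ) := by exact_mod_cast (by omega)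
    have hfactor : (p : ℝ) + 1 ≤ ((2 * N - (q - 1) : ℤ) : ℝ) ^ 1 := by
      rw [pow_one]; exact_mod_cast (by omega : p + 1 ≤ 2 * N - (q - 1))
    calc _ ≤ _ := Real.mul_rpow_le_rpow_add_natCast hbase hfactor
      _ = ((2 * N - (q - 1) : ℤ) : ℝ) ^ (((2 * N + 2 - p - q : ℤ) : ℝ) / 2) := by
          congr 1; push_cast; ring
      _ ≤ _ := Int.cast_rpow_div_two_le (by omega) (by omega) (by omega) (by omega) (by omega)
  · rw [eq_zero h, mul_zero]
    exact nonneg _ _ _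

end hermWeight

lemma abs_mul_le_of_abs_le_mul {a x C w W : ℝ} (ha : 0 ≤ a) (hC : 0 ≤ C) (hx : |x| ≤ C * w)
    (hw : a * w ≤ W) : |a * x| ≤ C * W := by
  rw [abs_mul, abs_of_nonneg ha]
  calc a * |x| ≤ a * (C * w) := by gcongr
    _ = C * (a * w) := by ring
    _ ≤ C * W := by gcongr

theorem abs_hermCoeff_le (N : ℕ) (p q : ℤ) :
    |(hermCoeff N p q : ℝ)| ≤ 12 ^ N * hermWeight N p q := by
  induction N generalizing p q with
  | zero =>
    by_cases h : p = 0 ∧ q = 0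
    · obtain ⟨rfl, rfl⟩ := h
      simp [hermCoeff, hermWeight]
    · rw [hermCoeff, if_neg h, Int.cast_zero, abs_zero]
      exact mul_nonneg (by positivity) (hermWeight.nonneg _ _ _)
  | succ N ih =>
    have hC : (0 : ℝ) ≤ 12 ^ N := by positivity
    by_cases hpq : 0 ≤ p ∧ 0 ≤ q
    swap
    · rw [hermCoeff.succ_of_neg N (by omega), Int.cast_zero, abs_zero]
      exact mul_nonneg (by positivity) (hermWeight.nonneg _ _ _)
    obtain ⟨hp, hq⟩ := hpq
    set W := hermWeight (N + 1) p q
    have h₁ : |(hermCoeff N p q : ℝ)| ≤ 12 ^ N * W :=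
      (ih p q).trans (by gcongr; exact hermWeight.le_succ)
    have h₂ : |(hermCoeff N (p - 2) q : ℝ)| ≤ 12 ^ N * W :=
      (ih _ _).trans (by gcongr; exact hermWeight.sub_two_left_le_succ)
    have h₃ : |(hermCoeff N p (q - 2) : ℝ)| ≤ 12 ^ N * W :=
      (ih _ _).trans (by gcongr; exact hermWeight.sub_two_right_le_succ)
    have h₄ : |((p : ℝ) + 2) * ((p : ℝ) + 1) * hermCoeff N (p + 2) q| ≤ 12 ^ N * W :=
      abs_mul_le_of_abs_le_mul (by positivity) hC (ih _ _)
        (hermWeight.mul_add_two_left_le_succ hp)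
    have h₅ : |((p : ℝ) + 1) * hermCoeff N (p + 1) (q - 1)| ≤ 12 ^ N * W :=
      abs_mul_le_of_abs_le_mul (by positivity) hC (ih _ _)
        (hermWeight.mul_add_one_sub_one_le_succ hp)
    rw [hermCoeff.succ_of_nonneg N hp hq, pow_succ]
    push_cast
    rw [abs_le] at h₁ h₂ h₃ h₄ h₅ ⊢
    constructor <;> linarith

theorem hermCoeff_bound_general (N : ℕ) (p q : ℕ) (hpq : p + q ≤ 2 * N) :
    |((hermCoeff N (p : ℤ) (q : ℤ) : ℤ) : ℝ)| ≤
      (26 : ℝ) ^ N * (((2 * N - q : ℕ) : ℝ)) ^ ((N : ℝ) - ((p : ℝ) + q) / 2) := by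
  have hq : q ≤ 2 * N := by omega
  have hw : hermWeight N p q = ((2 * N - q : ℕ) : ℝ) ^ ((N : ℝ) - ((p : ℝ) + q) / 2) := by
    rw [hermWeight.eq_rpow (by omega)]
    congr 1 <;> push_cast [hq] <;> ring
  calc _ ≤ 12 ^ N * hermWeight N p q := abs_hermCoeff_le N p q
    _ ≤ 26 ^ N * hermWeight N p q := by
      gcongr
      · exact hermWeight.nonneg _ _ _
      · norm_num
    _ = _ := by rw [hw]

/-- Bound on the coefficients: `|c^{(N)}_{p,q}| ≤ 26^N (2N-q)^{N-(p+q)/2}`. -/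
theorem hermCoeff_bound (N : ℕ) (hN : 1 ≤ N) (p q : ℕ) (hpq : p + q ≤ 2 * N) :
    |((hermCoeff N (p : ℤ) (q : ℤ) : ℤ) : ℝ)| ≤
      (26 : ℝ) ^ N * (((2 * N - q : ℕ) : ℝ)) ^ ((N : ℝ) - ((p : ℝ) + q) / 2) :=
  hermCoeff_bound_general N p q hpq
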